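/- Suppose α_n ≥ 1/2 for all n and that the 4-point inequality d_{il} + d_{kj} ≤ d_{ij} + d_{kl} holds for all 0 ≤ i ≤ k ≤ j ≤ l < n. Then for all m ≤ n, the plan z given by z_{ii} = π_i^n for i = 0,...,m; z_{mj} = π_j^n for j = m+1,...,n−1; z_{in} = π_i^m − π_i^n for i = 0,...,m−1; z_{mn} = π_m^m − Σ_{j=m}^{n-1} π_j^n; and z_{ij} = 0 otherwise, is a feasible and optimal transport plan for the problem defining d_{mn}. -/

import Mathlib

open Finset

/-- `kmPi α i n` is `π_i^n = α_i ∏_{k=i+1}^n (1 - α_k)` (empty product = 1). -/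
noncomputable def kmPi (α : ℕ → ℝ) (i n : ℕ) : ℝ :=
  α i * ∏ k ∈ Finset.Icc (i + 1) n, (1 - α k)
/-- A feasible transport plan between the probability vectors `π^m` and `π^n`. -/
def IsPlan (α : ℕ → ℝ) (m n : ℕ) (z : ℕ → ℕ → ℝ) : Prop :=
  (∀ i ≤ m, ∀ j ≤ n, 0 ≤ z i j) ∧
  (∀ i ≤ m, ∑ j ∈ Finset.range (n + 1), z i j = kmPi α i m) ∧
  (∀ j ≤ n, ∑ i ∈ Finset.range (m + 1), z i j = kmPi α j n)

/-- Transport cost `Σ_{i=0}^m Σ_{j=0}^n z_{ij} d_{i-1,j-1}`, where indices of `D` are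
shifted by one: `D i j` stands for `d_{i-1,j-1}`. -/
noncomputable def planCost (D : ℕ → ℕ → ℝ) (m n : ℕ) (z : ℕ → ℕ → ℝ) : ℝ :=
  ∑ i ∈ Finset.range (m + 1), ∑ j ∈ Finset.range (n + 1), z i j * D i j

/-- `D : ℕ → ℕ → ℝ` encodes the family `d_{mn}` for `m, n ∈ {-1,0,1,...}` with indices
shifted by one: `D (m+1) (n+1) = d_{m,n}`, `D 0 (k+1) = d_{-1,k}`, etc.  It is the
recursive optimal-transport family: boundary values `d_{-1,-1} = 0`,
`d_{-1,k} = d_{k,-1} = 1`, and `d_{mn}` is the minimum transport cost between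
`π^m` and `π^n` (the minimum, i.e. attained greatest lower bound). -/
def IsKMDist (α : ℕ → ℝ) (D : ℕ → ℕ → ℝ) : Prop :=
  D 0 0 = 0 ∧ (∀ k : ℕ, D 0 (k + 1) = 1) ∧ (∀ k : ℕ, D (k + 1) 0 = 1) ∧
  ∀ m n : ℕ,
    IsLeast {c : ℝ | ∃ z : ℕ → ℕ → ℝ, IsPlan α m n z ∧ c = planCost D m n z}
      (D (m + 1) (n + 1))
/-- The "inside-out" transport plan between `π^m` and `π^n` (for `m ≤ n`):
`z_{ii} = π_i^n` for `i ≤ m`, `z_{mj} = π_j^n` for `m < j < n`,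
`z_{in} = π_i^m - π_i^n` for `i < m`, `z_{mn} = π_m^m - Σ_{j=m}^{n-1} π_j^n`,
and `z_{ij} = 0` otherwise. -/
noncomputable def zio (α : ℕ → ℝ) (m n : ℕ) (i j : ℕ) : ℝ :=
  if i = j then kmPi α i n
  else if i = m ∧ m < j ∧ j < n then kmPi α j n
  else if i < m ∧ j = n then kmPi α i m - kmPi α i n
  else if i = m ∧ j = n then kmPi α m m - ∑ k ∈ Finset.Ico m n, kmPi α k n
  else 0

/-!
Optimality is certified by linear programming duality for the cost matrix `D i j`
(`i ≤ m`, `j ≤ n`). The potentials `u i = D i n - D m n` and `v j = D m j` for `j > m`,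
`v j = D m n - D j n` for `j ≤ m` are tight on the support of the inside-out plan. They are dual
feasible by the triangle inequality when `j ≤ m` and by the four-point inequality when `j > m`,
except in the boundary row `i = 0`, where feasibility is the monotonicity `D m j ≤ D m n` for
`m ≤ j ≤ n`.

Monotonicity comes from the averaging inequality `∑_{b ≤ N} π_b^N D i b ≤ D i (N + 1)` for
`i ≤ N`: spreading the last column of an optimal plan into `π^(N+1)` along `π^N` shows
`D a (N + 1) ≤ D a (N + 2)`, and the averaging inequality passes from `N` to `N + 1` through
`π^(N+1) = (1 - α_(N+1)) π^N + α_(N+1) δ_(N+1)`. The new case `i = N + 1` is the adjacent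
problem between `π^N` and `π^(N+1)`, whose inside-out plan is optimal by the triangle
inequality alone and has its last column dominating `π^(N+1)` because `α_(N+1) ≥ 1/2`.
Symmetry and the triangle inequality for `D` (by gluing plans) follow by induction on the
indices.
-/

def IsKMWeights (α : ℕ → ℝ) : Prop :=
  α 0 = 1 ∧ ∀ k, 1 ≤ k → α k ∈ Set.Ioo 0 1

section Weights

variable {α : ℕ → ℝ}

theorem IsKMWeights.pos (hw : IsKMWeights α) (k : ℕ) : 0 < α k := by
  rcases Nat.eq_zero_or_pos k with rfl | hk
  · simp [hw.1]
  · exact (hw.2 k hk).1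

theorem IsKMWeights.le_one (hw : IsKMWeights α) (k : ℕ) : α k ≤ 1 := by
  rcases Nat.eq_zero_or_pos k with rfl | hk
  · simp [hw.1]
  · exact (hw.2 k hk).2.le

theorem kmPi_self (i : ℕ) : kmPi α i i = α i := by
  simp [kmPi]

theorem kmPi_succ {i n : ℕ} (h : i ≤ n) :
    kmPi α i (n + 1) = (1 - α (n + 1)) * kmPi α i n := by
  rw [kmPi, kmPi, Finset.prod_Icc_succ_top (by omega)]
  ring

theorem kmPi_pos (hw : IsKMWeights α) (i n : ℕ) : 0 < kmPi α i n :=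
  mul_pos (hw.pos i) <| Finset.prod_pos fun k hk =>
    sub_pos.2 (hw.2 k (by linarith [(Finset.mem_Icc.1 hk).1])).2

theorem sum_kmPi (hα0 : α 0 = 1) (n : ℕ) : ∑ i ∈ range (n + 1), kmPi α i n = 1 := by
  induction n with
  | zero => simp [kmPi_self, hα0]
  | succ n ih =>
    rw [Finset.sum_range_succ, kmPi_self,
      Finset.sum_congr rfl fun i hi => kmPi_succ (Finset.mem_range_succ_iff.1 hi),
      ← Finset.mul_sum, ih]
    ring

theorem sum_range_kmPi (hα0 : α 0 = 1) (n : ℕ) : ∑ i ∈ range n, kmPi α i n = 1 - α n := by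
  have := sum_kmPi hα0 n
  rw [Finset.sum_range_succ, kmPi_self] at this
  linarith

theorem kmPi_le_of_le (hw : IsKMWeights α) {i m n : ℕ} (him : i ≤ m) (hmn : m ≤ n) :
    kmPi α i n ≤ kmPi α i m := by
  induction n, hmn using Nat.le_induction with
  | base => rfl
  | succ n hn ih =>
    rw [kmPi_succ (him.trans hn)]
    nlinarith [kmPi_pos hw i n, hw.pos (n + 1)]

end Weights

section Plans

variable {α : ℕ → ℝ} {m n : ℕ} {z : ℕ → ℕ → ℝ}

theorem IsPlan.sum_mul_add (hz : IsPlan α m n z) (u v : ℕ → ℝ) :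
    ∑ i ∈ range (m + 1), ∑ j ∈ range (n + 1), z i j * (u i + v j) =
      ∑ i ∈ range (m + 1), u i * kmPi α i m + ∑ j ∈ range (n + 1), v j * kmPi α j n := by
  simp only [mul_add, Finset.sum_add_distrib]
  congr 1
  · refine Finset.sum_congr rfl fun i hi => ?_
    rw [← Finset.sum_mul, hz.2.1 i (Finset.mem_range_succ_iff.1 hi), mul_comm]
  · rw [Finset.sum_comm]
    refine Finset.sum_congr rfl fun j hj => ?_
    rw [← Finset.sum_mul, hz.2.2 j (Finset.mem_range_succ_iff.1 hj), mul_comm]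

theorem IsPlan.transpose (hz : IsPlan α m n z) : IsPlan α n m (fun j i => z i j) :=
  ⟨fun j hj i hi => hz.1 i hi j hj, hz.2.2, hz.2.1⟩

theorem isPlan_prod (hw : IsKMWeights α) (m n : ℕ) :
    IsPlan α m n (fun i j => kmPi α i m * kmPi α j n) := by
  refine ⟨fun i _ j _ => (mul_pos (kmPi_pos hw i m) (kmPi_pos hw j n)).le,
    fun i _ => ?_, fun j _ => ?_⟩
  · rw [← Finset.mul_sum, sum_kmPi hw.1, mul_one]
  · rw [← Finset.sum_mul, sum_kmPi hw.1, one_mul]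

theorem isPlan_diag (hw : IsKMWeights α) (m : ℕ) :
    IsPlan α m m (fun i j => if i = j then kmPi α i m else 0) := by
  refine ⟨fun i _ j _ => ?_, fun i hi => ?_, fun j hj => ?_⟩
  · dsimp only
    split_ifs
    exacts [(kmPi_pos hw i m).le, le_rfl]
  · rw [Finset.sum_ite_eq, if_pos (Finset.mem_range.2 (Nat.lt_succ_of_le hi))]
  · rw [Finset.sum_ite_eq', if_pos (Finset.mem_range.2 (Nat.lt_succ_of_le hj))]

noncomputable def planComp (α : ℕ → ℝ) (q : ℕ) (z₁ z₂ : ℕ → ℕ → ℝ) (i k : ℕ) : ℝ :=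
  ∑ j ∈ range (q + 1), z₁ i j * z₂ j k / kmPi α j q

theorem IsPlan.comp (hw : IsKMWeights α) {p q r : ℕ} {z₁ z₂ : ℕ → ℕ → ℝ}
    (h₁ : IsPlan α p q z₁) (h₂ : IsPlan α q r z₂) : IsPlan α p r (planComp α q z₁ z₂) := by
  have hπ := kmPi_pos hw
  refine ⟨fun i hi k hk => Finset.sum_nonneg fun j hj => ?_, fun i hi => ?_, fun k hk => ?_⟩
  · have hj := Finset.mem_range_succ_iff.1 hj
    exact div_nonneg (mul_nonneg (h₁.1 i hi j hj) (h₂.1 j hj k hk)) (hπ j q).le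
  · simp only [planComp]
    rw [Finset.sum_comm, ← h₁.2.1 i hi]
    refine Finset.sum_congr rfl fun j hj => ?_
    rw [← Finset.sum_div, ← Finset.mul_sum,
      h₂.2.1 j (Finset.mem_range_succ_iff.1 hj), mul_div_cancel_right₀ _ (hπ j q).ne']
  · simp only [planComp]
    rw [Finset.sum_comm, ← h₂.2.2 k hk]
    refine Finset.sum_congr rfl fun j hj => ?_
    rw [← Finset.sum_div, ← Finset.sum_mul,
      h₁.2.2 j (Finset.mem_range_succ_iff.1 hj), mul_div_cancel_left₀ _ (hπ j q).ne']

theorem planCost_comp_le {D : ℕ → ℕ → ℝ} (hw : IsKMWeights α) {p q r : ℕ}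
    {z₁ z₂ : ℕ → ℕ → ℝ} (h₁ : IsPlan α p q z₁) (h₂ : IsPlan α q r z₂)
    (htri : ∀ i ≤ p, ∀ j ≤ q, ∀ k ≤ r, D i k ≤ D i j + D j k) :
    planCost D p r (planComp α q z₁ z₂) ≤ planCost D p q z₁ + planCost D q r z₂ := by
  have hπ := kmPi_pos hw
  have hleft : ∀ i, ∑ k ∈ range (r + 1), ∑ j ∈ range (q + 1), z₁ i j * z₂ j k / kmPi α j q * D i j
      = ∑ j ∈ range (q + 1), z₁ i j * D i j := fun i => by
    rw [Finset.sum_comm]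
    refine Finset.sum_congr rfl fun j hj => ?_
    have hj := Finset.mem_range_succ_iff.1 hj
    rw [← Finset.sum_mul, ← Finset.sum_div, ← Finset.mul_sum, h₂.2.1 j hj,
      mul_div_cancel_right₀ _ (hπ j q).ne']
  have hright : ∑ i ∈ range (p + 1), ∑ k ∈ range (r + 1), ∑ j ∈ range (q + 1),
      z₁ i j * z₂ j k / kmPi α j q * D j k = planCost D q r z₂ := by
    calc _ = ∑ k ∈ range (r + 1), ∑ j ∈ range (q + 1), ∑ i ∈ range (p + 1),
          z₁ i j * z₂ j k / kmPi α j q * D j k := by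
          rw [Finset.sum_comm]
          exact Finset.sum_congr rfl fun k _ => Finset.sum_comm
      _ = ∑ j ∈ range (q + 1), ∑ k ∈ range (r + 1), ∑ i ∈ range (p + 1),
          z₁ i j * z₂ j k / kmPi α j q * D j k := Finset.sum_comm
      _ = planCost D q r z₂ := by
          refine Finset.sum_congr rfl fun j hj => Finset.sum_congr rfl fun k _ => ?_
          have hj := Finset.mem_range_succ_iff.1 hj
          rw [← Finset.sum_mul, ← Finset.sum_div, ← Finset.sum_mul, h₁.2.2 j hj,
            mul_div_cancel_left₀ _ (hπ j q).ne']
  calc planCost D p r (planComp α q z₁ z₂)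
      = ∑ i ∈ range (p + 1), ∑ k ∈ range (r + 1), ∑ j ∈ range (q + 1),
          z₁ i j * z₂ j k / kmPi α j q * D i k := by
        simp only [planCost, planComp, Finset.sum_mul]
    _ ≤ ∑ i ∈ range (p + 1), ∑ k ∈ range (r + 1), ∑ j ∈ range (q + 1),
          (z₁ i j * z₂ j k / kmPi α j q * D i j + z₁ i j * z₂ j k / kmPi α j q * D j k) := by
        refine Finset.sum_le_sum fun i hi => Finset.sum_le_sum fun k hk =>
          Finset.sum_le_sum fun j hj => ?_
        have hi := Finset.mem_range_succ_iff.1 hi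
        have hj := Finset.mem_range_succ_iff.1 hj
        have hk := Finset.mem_range_succ_iff.1 hk
        rw [← mul_add]
        exact mul_le_mul_of_nonneg_left (htri i hi j hj k hk)
          (div_nonneg (mul_nonneg (h₁.1 i hi j hj) (h₂.1 j hj k hk)) (hπ j q).le)
    _ = planCost D p q z₁ + planCost D q r z₂ := by
        rw [← hright]
        simp only [Finset.sum_add_distrib, hleft, planCost]

end Plans

section Collapse

variable {α : ℕ → ℝ} {D : ℕ → ℕ → ℝ}

noncomputable def meanDist (α : ℕ → ℝ) (D : ℕ → ℕ → ℝ) (i N : ℕ) : ℝ :=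
  ∑ b ∈ range (N + 1), kmPi α b N * D i b

theorem meanDist_succ (i N : ℕ) :
    meanDist α D i (N + 1) = (1 - α (N + 1)) * meanDist α D i N + α (N + 1) * D i (N + 1) := by
  rw [meanDist, meanDist, Finset.sum_range_succ, kmPi_self, Finset.mul_sum]
  congr 1
  refine Finset.sum_congr rfl fun b hb => ?_
  rw [kmPi_succ (Finset.mem_range_succ_iff.1 hb), mul_assoc]

/-- Since `π^(t+1) = (1 - α_(t+1)) π^t + α_(t+1) δ_(t+1)`, spreading the mass that a plan into
`π^(t+1)` sends to the last point `t + 1` along `π^t` gives a plan into `π^t`. -/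
noncomputable def collapseLast (α : ℕ → ℝ) (t : ℕ) (z : ℕ → ℕ → ℝ) (i b : ℕ) : ℝ :=
  z i b + z i (t + 1) * kmPi α b t

variable {a t : ℕ} {z : ℕ → ℕ → ℝ}

theorem IsPlan.collapseLast (hw : IsKMWeights α) (hz : IsPlan α a (t + 1) z) :
    IsPlan α a t (collapseLast α t z) := by
  refine ⟨fun i hi b hb => ?_, fun i hi => ?_, fun b hb => ?_⟩
  · exact add_nonneg (hz.1 i hi b (by omega))
      (mul_nonneg (hz.1 i hi (t + 1) le_rfl) (kmPi_pos hw b t).le)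
  · have hrow := hz.2.1 i hi
    rw [Finset.sum_range_succ] at hrow
    simp only [_root_.collapseLast]
    rw [Finset.sum_add_distrib, ← Finset.mul_sum, sum_kmPi hw.1, mul_one, hrow]
  · have hlast := hz.2.2 (t + 1) le_rfl
    rw [kmPi_self] at hlast
    simp only [_root_.collapseLast]
    rw [Finset.sum_add_distrib, ← Finset.sum_mul, hz.2.2 b (by omega), hlast, kmPi_succ hb]
    ring

theorem planCost_collapseLast_le (hz : IsPlan α a (t + 1) z)
    (hmean : ∀ i ≤ a, meanDist α D i t ≤ D i (t + 1)) :
    planCost D a t (collapseLast α t z) ≤ planCost D a (t + 1) z := by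
  refine Finset.sum_le_sum fun i hi => ?_
  have hi := Finset.mem_range_succ_iff.1 hi
  have hrow : ∑ b ∈ range (t + 1), collapseLast α t z i b * D i b =
      ∑ b ∈ range (t + 1), z i b * D i b + z i (t + 1) * meanDist α D i t := by
    simp only [_root_.collapseLast, meanDist, add_mul, Finset.sum_add_distrib, Finset.mul_sum,
      mul_assoc]
  rw [hrow, Finset.sum_range_succ _ (t + 1)]
  gcongr
  · exact hz.1 i hi (t + 1) le_rfl
  · exact hmean i hi

end Collapse

section InsideOut

variable {α : ℕ → ℝ} {m n i j : ℕ}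

theorem zio_of_lt_of_lt (him : i < m) (hjn : j < n) :
    zio α m n i j = if i = j then kmPi α i n else 0 := by
  unfold zio
  split_ifs <;> first | rfl | omega

theorem zio_last_of_lt (hjn : j < n) : zio α m n m j = if m ≤ j then kmPi α j n else 0 := by
  unfold zio
  split_ifs <;> first | rfl | omega | (subst_vars; rfl)

theorem zio_of_lt_last (him : i < m) (hmn : m ≤ n) :
    zio α m n i n = kmPi α i m - kmPi α i n := by
  unfold zio
  split_ifs <;> first | rfl | omega

theorem zio_last_last (hmn : m ≤ n) :
    zio α m n m n = kmPi α m m - ∑ k ∈ Ico m n, kmPi α k n := by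
  unfold zio
  split_ifs with h <;> first | omega | rfl | (subst h; simp)

theorem zio_ne_zero (hzij : zio α m n i j ≠ 0) : i = j ∨ (i = m ∧ m < j) ∨ j = n := by
  unfold zio at hzij
  split_ifs at hzij <;> first | omega | exact absurd rfl hzij

theorem sum_zio_row_of_lt (him : i < m) (hmn : m ≤ n) :
    ∑ j ∈ range (n + 1), zio α m n i j = kmPi α i m := by
  rw [Finset.sum_range_succ, zio_of_lt_last him hmn,
    Finset.sum_congr rfl fun j hj => zio_of_lt_of_lt him (Finset.mem_range.1 hj),
    Finset.sum_ite_eq, if_pos (Finset.mem_range.2 (by omega))]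
  ring

theorem sum_zio_row_last (hmn : m ≤ n) :
    ∑ j ∈ range (n + 1), zio α m n m j = kmPi α m m := by
  rw [Finset.sum_range_succ, zio_last_last hmn,
    Finset.sum_congr rfl fun j hj => zio_last_of_lt (Finset.mem_range.1 hj),
    ← Finset.sum_filter, Finset.range_eq_Ico, Finset.Ico_filter_le, max_eq_right (Nat.zero_le m)]
  ring

theorem sum_zio_col_of_lt (hjn : j < n) :
    ∑ i ∈ range (m + 1), zio α m n i j = kmPi α j n := by
  rw [Finset.sum_range_succ, zio_last_of_lt hjn,
    Finset.sum_congr rfl fun i hi => zio_of_lt_of_lt (Finset.mem_range.1 hi) hjn,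
    Finset.sum_ite_eq']
  split_ifs with h₁ h₂ h₂ <;> simp only [Finset.mem_range] at h₁ <;> first | omega | simp

theorem sum_zio_col_last (hα0 : α 0 = 1) (hmn : m ≤ n) :
    ∑ i ∈ range (m + 1), zio α m n i n = kmPi α n n := by
  rw [Finset.sum_range_succ, zio_last_last hmn,
    Finset.sum_congr rfl fun i hi => zio_of_lt_last (Finset.mem_range.1 hi) hmn,
    Finset.sum_sub_distrib, kmPi_self, kmPi_self]
  have hsplit := Finset.sum_range_add_sum_Ico (fun k => kmPi α k n) hmn
  rw [sum_range_kmPi hα0] at hsplit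
  have := sum_range_kmPi hα0 (α := α) m
  linarith

theorem sum_Ico_kmPi_le (hw : IsKMWeights α) (hhalf : ∀ k, 1 ≤ k → 1 / 2 ≤ α k)
    (hmn : m ≤ n) : ∑ k ∈ Ico m n, kmPi α k n ≤ α m := by
  rcases hmn.lt_or_eq with hlt | rfl
  · have hsplit := Finset.sum_range_add_sum_Ico (fun k => kmPi α k n) hmn
    rw [sum_range_kmPi hw.1] at hsplit
    have hhead : 0 ≤ ∑ k ∈ range m, kmPi α k n :=
      Finset.sum_nonneg fun k _ => (kmPi_pos hw k n).le
    rcases Nat.eq_zero_or_pos m with rfl | hm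
    · linarith [hw.1, hw.pos n]
    · linarith [hhalf m hm, hhalf n (by omega)]
  · simp [(hw.pos m).le]

theorem zio_nonneg (hw : IsKMWeights α) (hhalf : ∀ k, 1 ≤ k → 1 / 2 ≤ α k) (hmn : m ≤ n)
    (hi : i ≤ m) (hj : j ≤ n) : 0 ≤ zio α m n i j := by
  rcases hi.lt_or_eq with him | rfl <;> rcases hj.lt_or_eq with hjn | rfl
  · rw [zio_of_lt_of_lt him hjn]
    split_ifs
    exacts [(kmPi_pos hw i n).le, le_rfl]
  · rw [zio_of_lt_last him hmn]
    exact sub_nonneg.2 (kmPi_le_of_le hw him.le hmn)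
  · rw [zio_last_of_lt hjn]
    split_ifs
    exacts [(kmPi_pos hw j n).le, le_rfl]
  · rw [zio_last_last hmn, kmPi_self, sub_nonneg]
    exact sum_Ico_kmPi_le hw hhalf hmn

theorem isPlan_zio (hw : IsKMWeights α) (hhalf : ∀ k, 1 ≤ k → 1 / 2 ≤ α k) (hmn : m ≤ n) :
    IsPlan α m n (zio α m n) := by
  refine ⟨fun i hi j hj => zio_nonneg hw hhalf hmn hi hj, fun i hi => ?_, fun j hj => ?_⟩
  · rcases hi.lt_or_eq with him | rfl
    exacts [sum_zio_row_of_lt him hmn, sum_zio_row_last hmn]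
  · rcases hj.lt_or_eq with hjn | rfl
    exacts [sum_zio_col_of_lt hjn, sum_zio_col_last hw.1 hmn]

end InsideOut

theorem grid_induction {P : ℕ → ℕ → Prop} (zero_left : ∀ b, P 0 b) (zero_right : ∀ a, P a 0)
    (succ : ∀ m n, (∀ i ≤ m, ∀ j ≤ n, P i j) → P (m + 1) (n + 1)) (a b : ℕ) : P a b := by
  suffices ∀ N, ∀ a ≤ N, ∀ b ≤ N, P a b from this (max a b) a (le_max_left a b) b (le_max_right a b)
  intro N
  induction N with
  | zero =>
    intro a ha b _
    obtain rfl : a = 0 := by omega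
    exact zero_left b
  | succ N ih =>
    rintro (_ | a) ha (_ | b) hb
    · exact zero_left 0
    · exact zero_left _
    · exact zero_right _
    · exact succ a b fun i hi j hj => ih i (by omega) j (by omega)

namespace IsKMDist

variable {α : ℕ → ℝ} {D : ℕ → ℕ → ℝ} (hD : IsKMDist α D)
include hD

theorem zero_zero : D 0 0 = 0 := hD.1

theorem zero_succ (k : ℕ) : D 0 (k + 1) = 1 := hD.2.1 k

theorem succ_zero (k : ℕ) : D (k + 1) 0 = 1 := hD.2.2.1 k

theorem le_planCost {m n : ℕ} {z : ℕ → ℕ → ℝ} (hz : IsPlan α m n z) :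
    D (m + 1) (n + 1) ≤ planCost D m n z :=
  (hD.2.2.2 m n).2 ⟨z, hz, rfl⟩

theorem exists_planCost_eq (m n : ℕ) :
    ∃ z, IsPlan α m n z ∧ planCost D m n z = D (m + 1) (n + 1) := by
  obtain ⟨z, hz, hc⟩ := (hD.2.2.2 m n).1
  exact ⟨z, hz, hc.symm⟩

theorem nonneg : ∀ a b, 0 ≤ D a b := by
  refine grid_induction (fun b => ?_) (fun a => ?_) fun m n ih => ?_
  · rcases b with _ | b
    · rw [hD.zero_zero]
    · rw [hD.zero_succ]; exact zero_le_one
  · rcases a with _ | a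
    · rw [hD.zero_zero]
    · rw [hD.succ_zero]; exact zero_le_one
  · obtain ⟨z, hz, hc⟩ := hD.exists_planCost_eq m n
    rw [← hc]
    refine Finset.sum_nonneg fun i hi => Finset.sum_nonneg fun j hj => ?_
    have hi := Finset.mem_range_succ_iff.1 hi
    have hj := Finset.mem_range_succ_iff.1 hj
    exact mul_nonneg (hz.1 i hi j hj) (ih i hi j hj)

theorem le_one (hw : IsKMWeights α) : ∀ a b, D a b ≤ 1 := by
  refine grid_induction (fun b => ?_) (fun a => ?_) fun m n ih => ?_
  · rcases b with _ | b
    · rw [hD.zero_zero]; exact zero_le_one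
    · rw [hD.zero_succ]
  · rcases a with _ | a
    · rw [hD.zero_zero]; exact zero_le_one
    · rw [hD.succ_zero]
  · refine (hD.le_planCost (isPlan_prod hw m n)).trans ?_
    calc planCost D m n (fun i j => kmPi α i m * kmPi α j n)
        ≤ ∑ i ∈ range (m + 1), ∑ j ∈ range (n + 1), kmPi α i m * kmPi α j n := by
          refine Finset.sum_le_sum fun i hi => Finset.sum_le_sum fun j hj => ?_
          have hi := Finset.mem_range_succ_iff.1 hi
          have hj := Finset.mem_range_succ_iff.1 hj
          exact mul_le_of_le_one_right
            (mul_pos (kmPi_pos hw i m) (kmPi_pos hw j n)).le (ih i hi j hj)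
      _ = 1 := by rw [← Finset.sum_mul_sum, sum_kmPi hw.1, sum_kmPi hw.1, mul_one]

theorem diag (hw : IsKMWeights α) (a : ℕ) : D a a = 0 := by
  induction a using Nat.strong_induction_on with
  | _ a ih =>
    rcases a with _ | m
    · exact hD.zero_zero
    refine le_antisymm ((hD.le_planCost (isPlan_diag hw m)).trans_eq ?_) (hD.nonneg _ _)
    refine Finset.sum_eq_zero fun i hi => ?_
    simp only [ite_mul, zero_mul, Finset.sum_ite_eq]
    rw [ih i (Finset.mem_range.1 hi), mul_zero, ite_self]

theorem le_of_symm_on {m n : ℕ} (hsymm : ∀ i ≤ m, ∀ j ≤ n, D i j = D j i) :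
    D (m + 1) (n + 1) ≤ D (n + 1) (m + 1) := by
  obtain ⟨z, hz, hc⟩ := hD.exists_planCost_eq n m
  refine (hD.le_planCost hz.transpose).trans_eq ?_
  rw [← hc, planCost, planCost, Finset.sum_comm]
  refine Finset.sum_congr rfl fun i hi => Finset.sum_congr rfl fun j hj => ?_
  rw [hsymm j (Finset.mem_range_succ_iff.1 hj) i (Finset.mem_range_succ_iff.1 hi)]

theorem symm : ∀ a b, D a b = D b a := by
  refine grid_induction (fun b => ?_) (fun a => ?_) fun m n ih => ?_
  · rcases b with _ | b
    · rfl
    · rw [hD.zero_succ, hD.succ_zero]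
  · rcases a with _ | a
    · rfl
    · rw [hD.zero_succ, hD.succ_zero]
  · exact le_antisymm (hD.le_of_symm_on ih)
      (hD.le_of_symm_on fun j hj i hi => (ih i hi j hj).symm)

theorem triangle (hw : IsKMWeights α) (a b c : ℕ) : D a c ≤ D a b + D b c := by
  suffices h : ∀ a c, ∀ b, D a c ≤ D a b + D b c from h a c b
  have h0 := hD.nonneg
  have h1 := hD.le_one hw
  refine grid_induction (fun c b => ?_) (fun a b => ?_) fun p r ih b => ?_
  · rcases c with _ | c
    · rw [hD.zero_zero]; exact add_nonneg (h0 _ _) (h0 _ _)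
    rcases b with _ | b
    · rw [hD.zero_zero, zero_add]
    · rw [hD.zero_succ, hD.zero_succ]; linarith [h0 (b + 1) (c + 1)]
  · rcases a with _ | a
    · rw [hD.zero_zero]; exact add_nonneg (h0 _ _) (h0 _ _)
    rcases b with _ | b
    · rw [hD.zero_zero, add_zero]
    · rw [hD.succ_zero, hD.succ_zero]; linarith [h0 (a + 1) (b + 1)]
  rcases b with _ | q
  · rw [hD.succ_zero, hD.zero_succ]; linarith [h1 (p + 1) (r + 1)]
  obtain ⟨z₁, hz₁, hc₁⟩ := hD.exists_planCost_eq p q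
  obtain ⟨z₂, hz₂, hc₂⟩ := hD.exists_planCost_eq q r
  rw [← hc₁, ← hc₂]
  exact (hD.le_planCost (hz₁.comp hw hz₂)).trans
    (planCost_comp_le hw hz₁ hz₂ fun i hi j _ k hk => ih i hi k hk j)

theorem planCost_eq_of_potentials {m n : ℕ} {z : ℕ → ℕ → ℝ} (hz : IsPlan α m n z)
    (u v : ℕ → ℝ) (hfeas : ∀ i ≤ m, ∀ j ≤ n, u i + v j ≤ D i j)
    (hslack : ∀ i ≤ m, ∀ j ≤ n, z i j ≠ 0 → u i + v j = D i j) :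
    planCost D m n z = D (m + 1) (n + 1) := by
  obtain ⟨w, hwp, hcw⟩ := hD.exists_planCost_eq m n
  refine le_antisymm ?_ (hD.le_planCost hz)
  calc planCost D m n z
      = ∑ i ∈ range (m + 1), ∑ j ∈ range (n + 1), z i j * (u i + v j) := by
        refine Finset.sum_congr rfl fun i hi => Finset.sum_congr rfl fun j hj => ?_
        have hi := Finset.mem_range_succ_iff.1 hi
        have hj := Finset.mem_range_succ_iff.1 hj
        by_cases hzij : z i j = 0
        · rw [hzij, zero_mul, zero_mul]
        · rw [hslack i hi j hj hzij]
    _ = ∑ i ∈ range (m + 1), ∑ j ∈ range (n + 1), w i j * (u i + v j) := by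
        rw [hz.sum_mul_add, hwp.sum_mul_add]
    _ ≤ D (m + 1) (n + 1) := by
        rw [← hcw]
        refine Finset.sum_le_sum fun i hi => Finset.sum_le_sum fun j hj => ?_
        have hi := Finset.mem_range_succ_iff.1 hi
        have hj := Finset.mem_range_succ_iff.1 hj
        exact mul_le_mul_of_nonneg_left (hfeas i hi j hj) (hwp.1 i hi j hj)

variable (hw : IsKMWeights α) (hhalf : ∀ k, 1 ≤ k → 1 / 2 ≤ α k)
include hw

include hhalf in
theorem planCost_zio {m n : ℕ} (hmn : m ≤ n)
    (hfour : ∀ i ≤ m, ∀ j, m < j → j ≤ n → D i n + D m j ≤ D i j + D m n) :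
    planCost D m n (zio α m n) = D (m + 1) (n + 1) := by
  refine hD.planCost_eq_of_potentials (isPlan_zio hw hhalf hmn) (fun i => D i n - D m n)
    (fun j => if m < j then D m j else D m n - D j n) (fun i hi j hj => ?_)
    (fun i hi j _ hzij => ?_)
  · split_ifs with hmj
    · linarith [hfour i hi j hmj hj]
    · linarith [hD.triangle hw i j n]
  · rcases zio_ne_zero hzij with rfl | ⟨rfl, hmj⟩ | rfl
    · rw [if_neg (by omega), hD.diag hw]; ring
    · rw [if_pos hmj]; ring
    · rcases hmn.lt_or_eq with hlt | rfl
      · rw [if_pos hlt]; ring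
      · rw [if_neg (lt_irrefl _), hD.diag hw]; ring

theorem meanDist_le_one (i N : ℕ) : meanDist α D i N ≤ 1 := by
  calc meanDist α D i N ≤ ∑ b ∈ range (N + 1), kmPi α b N := Finset.sum_le_sum fun b _ =>
        mul_le_of_le_one_right (kmPi_pos hw b N).le (hD.le_one hw i b)
    _ = 1 := sum_kmPi hw.1 N

include hhalf in
theorem meanDist_self_succ_le (t : ℕ) :
    meanDist α D (t + 1) (t + 1) ≤ D (t + 1) (t + 2) := by
  have hopt := hD.planCost_zio hw hhalf (Nat.le_succ t) fun i _ j hmj hj => by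
    obtain rfl : j = t + 1 := by omega
    exact le_rfl
  have hlast : ∀ b ≤ t, zio α t (t + 1) b (t + 1) = kmPi α b t - kmPi α b (t + 1) := by
    intro b hb
    rcases hb.lt_or_eq with hbt | rfl
    · exact zio_of_lt_last hbt (Nat.le_succ t)
    · rw [zio_last_last (Nat.le_succ b), Nat.Ico_succ_singleton, Finset.sum_singleton]
  have hcost : planCost D t (t + 1) (zio α t (t + 1)) =
      ∑ b ∈ range (t + 1), (kmPi α b t - kmPi α b (t + 1)) * D b (t + 1) := by
    refine Finset.sum_congr rfl fun b hb => ?_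
    have hb := Finset.mem_range_succ_iff.1 hb
    rw [Finset.sum_range_succ, hlast b hb, add_eq_right]
    refine Finset.sum_eq_zero fun j hj => ?_
    have hj := Finset.mem_range.1 hj
    by_cases hzbj : zio α t (t + 1) b j = 0
    · rw [hzbj, zero_mul]
    · obtain rfl : b = j := by have := zio_ne_zero hzbj; omega
      rw [hD.diag hw, mul_zero]
  rw [← hopt, hcost, meanDist, Finset.sum_range_succ, hD.diag hw, mul_zero, add_zero]
  refine Finset.sum_le_sum fun b hb => ?_
  have hb := Finset.mem_range_succ_iff.1 hb
  rw [hD.symm (t + 1) b]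
  refine mul_le_mul_of_nonneg_right ?_ (hD.nonneg _ _)
  rw [kmPi_succ hb]
  -- `(1 - α) π ≤ α π` because `α ≥ 1/2`
  nlinarith [kmPi_pos hw b t, hhalf (t + 1) (Nat.le_add_left 1 t)]

theorem le_succ_of_meanDist_le {a t : ℕ} (hmean : ∀ i ≤ a, meanDist α D i t ≤ D i (t + 1)) :
    D a (t + 1) ≤ D a (t + 2) := by
  rcases a with _ | a
  · rw [hD.zero_succ, hD.zero_succ]
  obtain ⟨z, hz, hc⟩ := hD.exists_planCost_eq a (t + 1)
  rw [← hc]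
  exact (hD.le_planCost (hz.collapseLast hw)).trans
    (planCost_collapseLast_le hz fun i hi => hmean i (hi.trans (Nat.le_succ a)))

include hhalf

theorem meanDist_le {i N : ℕ} (hi : i ≤ N) : meanDist α D i N ≤ D i (N + 1) := by
  induction N generalizing i with
  | zero =>
    obtain rfl : i = 0 := by omega
    rw [hD.zero_succ]
    exact hD.meanDist_le_one hw 0 0
  | succ t ih =>
    rcases hi.lt_or_eq with hit | rfl
    · have hit := Nat.lt_succ_iff.1 hit
      calc meanDist α D i (t + 1)
          = (1 - α (t + 1)) * meanDist α D i t + α (t + 1) * D i (t + 1) := meanDist_succ i t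
        _ ≤ D i (t + 1) := by nlinarith [ih hit, hw.le_one (t + 1)]
        _ ≤ D i (t + 2) := hD.le_succ_of_meanDist_le hw fun i' hi' => ih (hi'.trans hit)
    · exact hD.meanDist_self_succ_le hw hhalf t

theorem le_succ {a j : ℕ} (haj : a ≤ j) : D a j ≤ D a (j + 1) := by
  rcases haj.lt_or_eq with hlt | rfl
  · obtain ⟨t, rfl⟩ : ∃ t, j = t + 1 := ⟨j - 1, by omega⟩
    exact hD.le_succ_of_meanDist_le hw fun i hi => hD.meanDist_le hw hhalf (by omega)
  · rw [hD.diag hw]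
    exact hD.nonneg _ _

theorem mono_right {a j k : ℕ} (haj : a ≤ j) (hjk : j ≤ k) : D a j ≤ D a k :=
  monotoneOn_nat_Ici_of_le_succ (f := D a) (fun _ h => hD.le_succ hw hhalf h) haj
    (haj.trans hjk) hjk

end IsKMDist

/-- if `α_k ≥ 1/2` and the 4-point inequality holds for all
`0 ≤ i ≤ k ≤ j ≤ l < n`, then for every `m ≤ n` the inside-out plan is a feasible
and optimal transport plan for the problem defining `d_{mn}`. -/
theorem km_inside_out_optimal (α : ℕ → ℝ) (hα0 : α 0 = 1)
    (hα : ∀ k, 1 ≤ k → α k ∈ Set.Ico (1 / 2 : ℝ) 1)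
    (D : ℕ → ℕ → ℝ) (hD : IsKMDist α D) (n : ℕ)
    (h4 : ∀ i k j l : ℕ, i ≤ k → k ≤ j → j ≤ l → l < n →
      D (i + 1) (l + 1) + D (k + 1) (j + 1) ≤
        D (i + 1) (j + 1) + D (k + 1) (l + 1)) :
    ∀ m ≤ n, IsPlan α m n (zio α m n) ∧
      planCost D m n (zio α m n) = D (m + 1) (n + 1) := by
  intro m hmn
  have hhalf : ∀ k, 1 ≤ k → 1 / 2 ≤ α k := fun k hk => (hα k hk).1
  have hw : IsKMWeights α :=
    ⟨hα0, fun k hk => ⟨by linarith [hhalf k hk], (hα k hk).2⟩⟩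
  refine ⟨isPlan_zio hw hhalf hmn, hD.planCost_zio hw hhalf hmn fun i hi j hmj hjn => ?_⟩
  rcases hi.lt_or_eq with him | rfl
  · obtain ⟨m', rfl⟩ : ∃ m', m = m' + 1 := ⟨m - 1, by omega⟩
    obtain ⟨j', rfl⟩ : ∃ j', j = j' + 1 := ⟨j - 1, by omega⟩
    obtain ⟨n', rfl⟩ : ∃ n', n = n' + 1 := ⟨n - 1, by omega⟩
    rcases i with _ | i'
    · rw [hD.zero_succ, hD.zero_succ]
      linarith [hD.mono_right hw hhalf hmj.le hjn]
    · exact h4 i' m' j' n' (by omega) (by omega) (by omega) (by omega)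
  · exact (add_comm _ _).le
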